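/- Let k be a field and B a finite-dimensional commutative local k-algebra equipped with a k-algebra homomorphism π : B → k. Let R ⊆ S be an extension of k-algebras such that S is a formally étale R-algebra, and let ∂ : R → S ⊗_k B be a B-operator from R to S whose underlying homomorphism ∂₀ : R → S is the inclusion. Then ∂ extends uniquely to a B-operator on S: there is a unique k-algebra homomorphism ∂' : S → S ⊗_k B such that (id_S ⊗ π) ∘ ∂' = id_S and ∂'|_R = ∂. -/

import Mathlib

/-!
Since `B` is artinian local, `ker π` is nilpotent, hence so is the kernel `ker π · (S ⊗ B)` of
`id_S ⊗ π : S ⊗[k] B → S`. Through `δ`, the ring `S ⊗[k] B` is an `R`-algebra and `id_S ⊗ π`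
an `R`-algebra map onto `S`; formal étaleness of `S/R` gives a unique `R`-algebra section of it,
and `R`-linear sections are exactly the `k`-linear sections extending `δ`.
-/

open TensorProduct

/-- The underlying homomorphism extractor `∂₀ = (id_T ⊗ π) ∘ ∂` of a `B`-operator:
the algebra map `T ⊗[k] B → T` induced by `π : B → k` and `T ⊗[k] k ≅ T`. -/
noncomputable def BOp.counit (k T B : Type*) [CommSemiring k] [CommSemiring T] [Algebra k T]
    [CommSemiring B] [Algebra k B] (π : B →ₐ[k] k) : T ⊗[k] B →ₐ[k] T :=
  (Algebra.TensorProduct.rid k k T).toAlgHom.comp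
    (Algebra.TensorProduct.map (AlgHom.id k T) π)

theorem IsLocalRing.isNilpotent_ker_of_isArtinianRing {B K : Type*} [CommRing B]
    [IsArtinianRing B] [IsLocalRing B] [Semiring K] [Nontrivial K] {F : Type*} [FunLike F B K]
    [RingHomClass F B K] (f : F) :
    IsNilpotent (RingHom.ker f) := by
  obtain ⟨n, hn⟩ : IsNilpotent (maximalIdeal B) := by
    rw [← jacobson_eq_maximalIdeal ⊥ bot_ne_top]
    exact IsArtinianRing.isNilpotent_jacobson_bot
  refine ⟨n, ?_⟩
  rw [Ideal.zero_eq_bot, ← le_bot_iff] at hn ⊢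
  exact (Ideal.pow_right_mono (le_maximalIdeal (RingHom.ker_ne_top f)) n).trans hn

namespace Algebra.FormallyEtale

theorem existsUnique_section {R S A : Type*} [CommRing R] [CommRing S] [Algebra R S]
    [FormallyEtale R S] [CommRing A] [Algebra R A] (c : A →ₐ[R] S)
    (hc : Function.Surjective c) (hnil : IsNilpotent (RingHom.ker c)) :
    ∃! l : S →ₐ[R] A, c.comp l = AlgHom.id R S :=
  ⟨FormallySmooth.liftOfSurjective _ c hc hnil, FormallySmooth.comp_liftOfSurjective _ c hc hnil,
    fun _ hl => FormallyUnramified.lift_unique' c hnil _ _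
      (hl.trans (FormallySmooth.comp_liftOfSurjective _ c hc hnil).symm)⟩

theorem existsUnique_extension {k R S A : Type*} [CommRing k] [CommRing R] [CommRing S]
    [CommRing A] [Algebra k R] [Algebra k S] [Algebra k A] [Algebra R S] [IsScalarTower k R S]
    [FormallyEtale R S] (c : A →ₐ[k] S) (hc : Function.Surjective c)
    (hnil : IsNilpotent (RingHom.ker c)) (f : R →ₐ[k] A)
    (hf : c.comp f = IsScalarTower.toAlgHom k R S) :
    ∃! g : S →ₐ[k] A,
      c.comp g = AlgHom.id k S ∧ g.comp (IsScalarTower.toAlgHom k R S) = f := by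
  let _ : Algebra R A := f.toAlgebra
  have : IsScalarTower k R A := .of_algebraMap_eq fun x => (f.commutes x).symm
  let cR : A →ₐ[R] S := { c with commutes' := fun r => AlgHom.congr_fun hf r }
  obtain ⟨l, hl, hl_unique⟩ := existsUnique_section cR hc hnil
  refine ⟨l.restrictScalars k, ⟨AlgHom.ext fun s => AlgHom.congr_fun hl s,
    AlgHom.ext fun r => l.commutes r⟩, ?_⟩
  rintro g ⟨hg_section, hg_extends⟩
  let gR : S →ₐ[R] A := { g with commutes' := fun r => AlgHom.congr_fun hg_extends r }
  have hgR : gR = l := hl_unique gR (AlgHom.ext fun s => AlgHom.congr_fun hg_section s)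
  exact AlgHom.ext fun s => AlgHom.congr_fun hgR s

end Algebra.FormallyEtale

namespace BOp

section CommSemiring

variable (k T B : Type*) [CommSemiring k] [CommSemiring T] [Algebra k T] [CommSemiring B]
  [Algebra k B] (π : B →ₐ[k] k)

@[simp]
theorem counit_tmul (t : T) (b : B) : counit k T B π (t ⊗ₜ b) = π b • t := by
  simp [counit]

theorem counit_surjective : Function.Surjective (counit k T B π) :=
  fun t => ⟨t ⊗ₜ 1, by simp⟩

end CommSemiring

variable (k T B : Type*) [CommRing k] [CommRing T] [Algebra k T] [CommRing B] [Algebra k B]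
  (π : B →ₐ[k] k)

theorem ker_counit :
    RingHom.ker (counit k T B π) =
      (RingHom.ker π).map (Algebra.TensorProduct.includeRight : B →ₐ[k] T ⊗[k] B) := by
  have hπ : Function.Surjective π := fun x => ⟨algebraMap k B x, π.commutes x⟩
  rw [← Algebra.TensorProduct.lTensor_ker _ hπ]
  exact RingHom.ker_comp_of_injective _ (Algebra.TensorProduct.rid k k T).injective

theorem isNilpotent_ker_counit [Nontrivial k] [IsArtinianRing B] [IsLocalRing B] :
    IsNilpotent (RingHom.ker (counit k T B π)) := by
  rw [ker_counit]
  exact (IsLocalRing.isNilpotent_ker_of_isArtinianRing π).map (Ideal.mapHom _)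

end BOp

theorem BOperator.extends_uniquely_of_formallyEtale.{u}
    (k B : Type*) [Field k] [CommRing B] [Algebra k B]
    [FiniteDimensional k B] [IsLocalRing B] (π : B →ₐ[k] k)
    (R S : Type u) [CommRing R] [Algebra k R] [CommRing S] [Algebra k S]
    [Algebra R S] [IsScalarTower k R S]
    (hRS : Function.Injective (algebraMap R S))
    [Algebra.FormallyEtale R S]
    (δ : R →ₐ[k] S ⊗[k] B)
    (h0 : (BOp.counit k S B π).comp δ = IsScalarTower.toAlgHom k R S) :
    ∃! δ' : S →ₐ[k] S ⊗[k] B,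
      (BOp.counit k S B π).comp δ' = AlgHom.id k S ∧
        δ'.comp (IsScalarTower.toAlgHom k R S) = δ := by
  have : IsArtinianRing B := isArtinian_of_tower k inferInstance
  exact Algebra.FormallyEtale.existsUnique_extension (BOp.counit k S B π)
    (BOp.counit_surjective k S B π) (BOp.isNilpotent_ker_counit k S B π) δ h0
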